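/- arXiv:1707.02542 — 3 statements merged into one kernel-verified Lean document; each statement's English description precedes it below -/
import Mathlib

section
/- Let R be a commutative noetherian ring, S a Serre subcategory of the category of R-modules, I an ideal of R, and M an R-module. If the submodule (0 :_M I) belongs to S, then (0 :_M I^n) belongs to S for every positive integer n. -/
/-!
Common framework: a *Serre class* is a class of (bundled) `R`-modules closed under
submodules, quotient modules and extensions.  `MelkerssonCondition R P I` is the
Melkersson condition `(C_I)`: if `Γ_I(M) = M` (every element of `M` is annihilated by
some power of `I`) and `(0 :_M I)` (the `I`-torsion-by-`I` submodule `torsionBySet`)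
belongs to the class, then `M` belongs to the class.  `MP R P` is the set of prime
ideals `p` such that the class satisfies `(C_p)`.
-/

open CategoryTheory

structure SerreClass (R : Type) [CommRing R] where
  mem : ModuleCat.{0} R → Prop
  mem_of_injective : ∀ {M N : ModuleCat.{0} R} (f : M →ₗ[R] N),
    Function.Injective f → mem N → mem M
  mem_of_surjective : ∀ {M N : ModuleCat.{0} R} (f : M →ₗ[R] N),
    Function.Surjective f → mem M → mem N
  mem_of_extension : ∀ {A M B : ModuleCat.{0} R} (f : A →ₗ[R] M) (g : M →ₗ[R] B),
    Function.Injective f → Function.Surjective g →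
    LinearMap.range f = LinearMap.ker g → mem A → mem B → mem M

variable (R : Type) [CommRing R]

/-- `Γ_I(M) = M`: every element of `M` is annihilated by some power of `I`. -/
def IsTorsionByPowers (I : Ideal R) (M : ModuleCat.{0} R) : Prop :=
  ∀ m : M, ∃ n : ℕ, ∀ x ∈ I ^ n, x • m = 0

/-- The Melkersson condition `(C_I)` for a class `P` of `R`-modules:
if `Γ_I(M) = M` and `(0 :_M I) ∈ P` then `M ∈ P`. -/
def MelkerssonCondition (P : ModuleCat.{0} R → Prop) (I : Ideal R) : Prop :=
  ∀ M : ModuleCat.{0} R, IsTorsionByPowers R I M →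
    P (ModuleCat.of R (Submodule.torsionBySet R M (I : Set R))) → P M

/-- `MP[P]`: the set of prime ideals `p` such that `P` satisfies `(C_p)`. -/
def MP (P : ModuleCat.{0} R → Prop) : Set (PrimeSpectrum R) :=
  { p | MelkerssonCondition R P p.asIdeal }

/-- The class `FG` of finitely generated `R`-modules. -/
def FGClass : ModuleCat.{0} R → Prop := fun M => Module.Finite R M

/-- Membership in the extension subcategory `P * Q`: `M` fits in a short exact
sequence `0 → A → M → B → 0` with `A ∈ P` and `B ∈ Q`. -/
def IsExtensionIn (P Q : ModuleCat.{0} R → Prop) (M : ModuleCat.{0} R) : Prop :=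
  ∃ (A B : ModuleCat.{0} R) (f : A →ₗ[R] M) (g : M →ₗ[R] B),
    Function.Injective f ∧ Function.Surjective g ∧
    LinearMap.range f = LinearMap.ker g ∧ P A ∧ Q B

/-- `Supp(P) = ⋃_{M ∈ P} Supp_R M`. -/
def SuppClass (P : ModuleCat.{0} R → Prop) : Set (PrimeSpectrum R) :=
  ⋃ (M : ModuleCat.{0} R) (_ : P M), Module.support R M

/-- `E` is an injective hull of `N`: `E` is injective and contains `N` as an
essential submodule. -/
def IsInjectiveHull (N E : ModuleCat.{0} R) : Prop :=
  Module.Injective R E ∧ ∃ f : N →ₗ[R] E, Function.Injective f ∧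
    ∀ W : Submodule R E, W ≠ ⊥ → W ⊓ LinearMap.range f ≠ ⊥

/-- `M` is `I`-cofinite: `Supp M ⊆ V(I)` and `Ext^i_R(R/I, M)` is a finitely
generated `R`-module for every `i`. -/
noncomputable def IsCofiniteWrt (I : Ideal R) (M : ModuleCat.{0} R) : Prop :=
  Module.support R M ⊆ PrimeSpectrum.zeroLocus (I : Set R) ∧
  ∀ i : ℕ, Module.Finite R
    (((Ext R (ModuleCat.{0} R) i).obj (Opposite.op (ModuleCat.of R (R ⧸ I)))).obj M)

/-- A specialization closed subset of `Spec R`. -/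
def SpecializationClosed (W : Set (PrimeSpectrum R)) : Prop :=
  ∀ p ∈ W, ∀ q : PrimeSpectrum R, p.asIdeal ≤ q.asIdeal → q ∈ W

/-!
Choose generators `g₁, …, gₖ` of `I`. Multiplication by the `gᵢ` maps `(0 :_M I^(n+1))` into
`(0 :_M I^n)^k` with kernel `(0 :_M I)`, so `(0 :_M I^(n+1))` is an extension of `(0 :_M I)` by a
submodule of `(0 :_M I^n)^k`, and induction on `n` applies, starting from `(0 :_M I^0) = 0`.
-/

namespace SerreClass

variable {R : Type} [CommRing R] (S : SerreClass R)

lemma mem_of_subsingleton {A N : ModuleCat.{0} R} [Subsingleton A] (hN : S.mem N) : S.mem A :=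
  S.mem_of_injective (0 : A →ₗ[R] N) (Function.injective_of_subsingleton _) hN

lemma mem_of_linearEquiv {A B : ModuleCat.{0} R} (e : A ≃ₗ[R] B) (hA : S.mem A) : S.mem B :=
  S.mem_of_surjective e.toLinearMap e.surjective hA

lemma mem_prod {N P : ModuleCat.{0} R} (hN : S.mem N) (hP : S.mem P) :
    S.mem (ModuleCat.of R (N × P)) :=
  S.mem_of_extension (LinearMap.inl R N P) (LinearMap.snd R N P) LinearMap.inl_injective
    LinearMap.snd_surjective (LinearMap.range_inl R N P) hN hP

lemma mem_pi_fin {N : ModuleCat.{0} R} (hN : S.mem N) :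
    ∀ k : ℕ, S.mem (ModuleCat.of R (Fin k → N))
  | 0 => S.mem_of_subsingleton hN
  | k + 1 => S.mem_of_linearEquiv (A := ModuleCat.of R (N × (Fin k → N)))
      (Fin.consLinearEquiv R fun _ => N) (S.mem_prod hN (mem_pi_fin hN k))

lemma mem_of_exact {A M B : ModuleCat.{0} R} (f : A →ₗ[R] M) (φ : M →ₗ[R] B)
    (hf : Function.Injective f) (hfφ : LinearMap.range f = LinearMap.ker φ)
    (hA : S.mem A) (hB : S.mem B) : S.mem M :=
  S.mem_of_extension f (LinearMap.ker φ).mkQ hf (LinearMap.ker φ).mkQ_surjective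
    (by rw [Submodule.ker_mkQ, hfφ]) hA
    (S.mem_of_injective (M := ModuleCat.of R (M ⧸ LinearMap.ker φ))
      ((LinearMap.ker φ).liftQ φ le_rfl)
      (LinearMap.ker_eq_bot.mp (Submodule.ker_liftQ_eq_bot _ _ _ le_rfl)) hB)

end SerreClass

namespace Submodule

variable {R M : Type*} [CommRing R] [AddCommGroup M] [Module R M]

lemma smul_mem_torsionBySet_pow {I : Ideal R} {a : R} (ha : a ∈ I) {n : ℕ} {x : M}
    (hx : x ∈ torsionBySet R M ↑(I ^ (n + 1))) : a • x ∈ torsionBySet R M ↑(I ^ n) := by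
  rw [mem_torsionBySet_iff] at hx ⊢
  rintro ⟨b, hb⟩
  rw [smul_smul]
  exact hx ⟨b * a, by rw [pow_succ]; exact Ideal.mul_mem_mul hb ha⟩

variable {k : ℕ} (g : Fin k → R) (n : ℕ)

def torsionBySetPowSuccToPi :
    torsionBySet R M ↑(Ideal.span (Set.range g) ^ (n + 1)) →ₗ[R]
      Fin k → torsionBySet R M ↑(Ideal.span (Set.range g) ^ n) :=
  LinearMap.pi fun i => ((g i) • (torsionBySet R M _).subtype).codRestrict _ fun x =>
    smul_mem_torsionBySet_pow (Ideal.subset_span (Set.mem_range_self i)) x.2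

lemma range_inclusion_eq_ker_torsionBySetPowSuccToPi :
    LinearMap.range (inclusion (torsionBySet_le_torsionBySet_of_subset
      (Ideal.pow_le_self n.succ_ne_zero) : torsionBySet R M ↑(Ideal.span (Set.range g)) ≤ _)) =
      LinearMap.ker (torsionBySetPowSuccToPi (M := M) g n) := by
  ext x
  simp only [LinearMap.mem_range, LinearMap.mem_ker]
  constructor
  · rintro ⟨y, rfl⟩
    funext i
    exact Subtype.ext
      ((mem_torsionBySet_iff _ _).mp y.2 ⟨g i, Ideal.subset_span (Set.mem_range_self i)⟩)
  · intro hx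
    refine ⟨⟨x, ?_⟩, rfl⟩
    rw [← torsionBySet_eq_torsionBySet_span, mem_torsionBySet_iff]
    rintro ⟨_, i, rfl⟩
    exact congrArg Subtype.val (congrFun hx i)

end Submodule

theorem stmt_0_general {R : Type} [CommRing R] [IsNoetherianRing R] (S : SerreClass R)
    (I : Ideal R) (M : ModuleCat.{0} R)
    (h : S.mem (ModuleCat.of R (Submodule.torsionBySet R M (I : Set R))))
    (n : ℕ) :
    S.mem (ModuleCat.of R (Submodule.torsionBySet R M ((I ^ n : Ideal R) : Set R))) := by
  obtain ⟨k, g, rfl⟩ :=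
    Submodule.fg_iff_exists_fin_generating_family.mp (IsNoetherian.noetherian I)
  induction n with
  | zero =>
    have : Subsingleton (Submodule.torsionBySet R M ↑(Ideal.span (Set.range g) ^ 0)) := by
      rw [pow_zero, Ideal.one_eq_top, Submodule.top_coe, Submodule.torsionBySet_univ]
      infer_instance
    exact S.mem_of_subsingleton h
  | succ n ih =>
    exact S.mem_of_exact _ _ (Submodule.inclusion_injective _)
      (Submodule.range_inclusion_eq_ker_torsionBySetPowSuccToPi g n) h (S.mem_pi_fin ih k)

/-- If `(0 :_M I) ∈ S` then `(0 :_M I^n) ∈ S` for every positive integer `n`. -/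
theorem stmt_0 {R : Type} [CommRing R] [IsNoetherianRing R] (S : SerreClass R)
    (I : Ideal R) (M : ModuleCat.{0} R)
    (h : S.mem (ModuleCat.of R (Submodule.torsionBySet R M (I : Set R))))
    (n : ℕ) (hn : 0 < n) :
    S.mem (ModuleCat.of R (Submodule.torsionBySet R M ((I ^ n : Ideal R) : Set R))) :=
  stmt_0_general S I M h n
end

section
/- Let R be a commutative noetherian ring and S a Serre subcategory of the category of R-modules. If MP[S] contains every prime ideal of R of height at least 1, then MP[S] contains all minimal prime ideals of R; in particular MP[S] = Spec(R). -/
/-!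
Common framework: a *Serre class* is a class of (bundled) `R`-modules closed under
submodules, quotient modules and extensions.  `MelkerssonCondition R P I` is the
Melkersson condition `(C_I)`: if `Γ_I(M) = M` (every element of `M` is annihilated by
some power of `I`) and `(0 :_M I)` (the `I`-torsion-by-`I` submodule `torsionBySet`)
belongs to the class, then `M` belongs to the class.  `MP R P` is the set of prime
ideals `p` such that the class satisfies `(C_p)`.
-/

open CategoryTheory

variable (R : Type) [CommRing R]

/-!
Noetherian induction shows that `(C_J)` holds as soon as `(C_q)` holds for every prime `q ⊇ J`:
if `J` is not prime, pick `a, b ∉ J` with `ab ∈ J`; for a `J`-torsion module `M` the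
`a`-power torsion `L` falls under `(C_{J+(a)})` and `M/L` under `(C_{J+(b)})`, while
`(0 :_{M/L} J+(b))` stays in the class because `J` is finitely generated.

For a minimal prime `p`, some `s ∉ p` kills a power `pⁿ` (as `pRₚ` is nilpotent). Every prime
over `p + (s)` strictly contains `p`, so has positive height, hence `(0 :_M s)` is in the class,
and so is `s • M ⊆ (0 :_M pⁿ)`.
-/

open Submodule

section TorsionByPowers

variable {R : Type} [CommRing R]

lemma smul_eq_zero_of_mem_sup_pow {M : Type} [AddCommGroup M] [Module R M] {m : M}
    {I J : Ideal R} {n k : ℕ} (hI : ∀ x ∈ I ^ n, x • m = 0) (hJ : ∀ x ∈ J ^ k, x • m = 0) :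
    ∀ x ∈ (I ⊔ J) ^ (n + k), x • m = 0 := by
  simp only [← mem_annihilator_span_singleton] at hI hJ ⊢
  have hIJ : I ^ n ⊔ J ^ k ≤ (R ∙ m).annihilator := sup_le hI hJ
  exact fun x hx => hIJ (Ideal.sup_pow_add_le_pow_sup_pow hx)

lemma smul_eq_zero_of_mem_span_singleton_pow {M : Type} [AddCommGroup M] [Module R M] {m : M}
    {a : R} {k : ℕ} (h : a ^ k • m = 0) : ∀ x ∈ Ideal.span {a} ^ k, x • m = 0 := by
  rintro x hx
  obtain ⟨c, rfl⟩ := Ideal.mem_span_singleton'.mp (Ideal.span_singleton_pow a k ▸ hx)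
  rw [mul_smul, h, smul_zero]

variable {M : ModuleCat.{0} R} {I : Ideal R}

lemma IsTorsionByPowers.submodule_sup (hM : IsTorsionByPowers R I M) (A : Submodule R M)
    {a : R} (hA : ∀ m ∈ A, ∃ k : ℕ, a ^ k • m = 0) :
    IsTorsionByPowers R (I ⊔ Ideal.span {a}) (.of R A) := by
  rintro ⟨m, hm⟩
  obtain ⟨n, hn⟩ := hM m
  obtain ⟨k, hk⟩ := hA m hm
  exact ⟨n + k, fun x hx => Subtype.ext
    (smul_eq_zero_of_mem_sup_pow hn (smul_eq_zero_of_mem_span_singleton_pow hk) x hx)⟩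

lemma IsTorsionByPowers.quotient_sup (hM : IsTorsionByPowers R I M) (L : Submodule R M)
    {b : R} (hL : ∀ m : M, ∃ k : ℕ, b ^ k • m ∈ L) :
    IsTorsionByPowers R (I ⊔ Ideal.span {b}) (.of R (M ⧸ L)) := by
  intro m
  obtain ⟨m, rfl⟩ := L.mkQ_surjective m
  obtain ⟨n, hn⟩ := hM m
  obtain ⟨k, hk⟩ := hL m
  refine ⟨n + k, smul_eq_zero_of_mem_sup_pow (fun x hx => ?_) ?_⟩
  · rw [← map_smul, hn x hx, map_zero]
  · exact smul_eq_zero_of_mem_span_singleton_pow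
      (by rwa [← map_smul, mkQ_apply, Quotient.mk_eq_zero])

end TorsionByPowers

/-- `p Rₚ` is the nilradical of the local ring `Rₚ`, hence nilpotent, so some `pⁿ` dies in `Rₚ`;
as `pⁿ` is finitely generated it is killed by a single element outside `p`. -/
theorem Ideal.exists_notMem_forall_mem_pow_mul_eq_zero {R : Type} [CommRing R]
    [IsNoetherianRing R] {p : Ideal R} (hp : p ∈ minimalPrimes R) :
    ∃ n : ℕ, ∃ s ∉ p, ∀ x ∈ p ^ n, s * x = 0 := by
  have hp' : p.IsPrime := hp.1.1
  let Rₚ := Localization.AtPrime p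
  have hrad : p.map (algebraMap R Rₚ) ≤ (⊥ : Ideal Rₚ).radical := by
    rw [← Ideal.map_bot (f := algebraMap R Rₚ),
      IsLocalization.AtPrime.radical_map_of_mem_minimalPrimes Rₚ p ⊥ hp]
  obtain ⟨n, hn⟩ := Ideal.exists_pow_le_of_le_radical_of_fg hrad
    (Ideal.FG.map (IsNoetherian.noetherian p) _)
  have hsupp : (⟨p, hp'⟩ : PrimeSpectrum R) ∉ Module.support R (p ^ n : Ideal R) := by
    refine Module.notMem_support_iff'.mpr fun x => ?_
    have hx0 : algebraMap R Rₚ x = 0 := by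
      simpa using hn (Ideal.map_pow (algebraMap R Rₚ) p n ▸ Ideal.mem_map_of_mem _ x.2)
    obtain ⟨⟨t, ht⟩, htx⟩ := (IsLocalization.map_eq_zero_iff p.primeCompl Rₚ _).mp hx0
    exact ⟨t, ht, Subtype.ext htx⟩
  rw [Module.mem_support_iff_of_finite, SetLike.not_le_iff_exists] at hsupp
  obtain ⟨s, hs, hsp⟩ := hsupp
  exact ⟨n, s, hsp, fun x hx => congrArg Subtype.val (Module.mem_annihilator.mp hs ⟨x, hx⟩)⟩

namespace SerreClass

variable {R : Type} [CommRing R] (S : SerreClass R)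

section Closure

variable {M N : Type} [AddCommGroup M] [Module R M] [AddCommGroup N] [Module R N]

lemma mem_of_injective' (f : M →ₗ[R] N) (hf : Function.Injective f)
    (hN : S.mem (.of R N)) : S.mem (.of R M) :=
  S.mem_of_injective (M := .of R M) (N := .of R N) f hf hN

lemma mem_of_surjective' (f : M →ₗ[R] N) (hf : Function.Surjective f)
    (hM : S.mem (.of R M)) : S.mem (.of R N) :=
  S.mem_of_surjective (M := .of R M) (N := .of R N) f hf hM

lemma mem_of_le {A B : Submodule R M} (hAB : A ≤ B) (hB : S.mem (.of R B)) :
    S.mem (.of R A) :=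
  S.mem_of_injective' (inclusion hAB) (inclusion_injective hAB) hB

lemma mem_of_mem_quotient (L : Submodule R M) (hL : S.mem (.of R L))
    (hQ : S.mem (.of R (M ⧸ L))) : S.mem (.of R M) :=
  S.mem_of_extension (A := .of R L) (M := .of R M) (B := .of R (M ⧸ L)) L.subtype L.mkQ
    L.injective_subtype L.mkQ_surjective (by rw [range_subtype, ker_mkQ]) hL hQ

lemma mem_of_mem_ker (f : M →ₗ[R] N) (hker : S.mem (.of R (LinearMap.ker f)))
    (hN : S.mem (.of R N)) : S.mem (.of R M) :=
  S.mem_of_mem_quotient _ hker <| S.mem_of_injective' ((LinearMap.ker f).liftQ f le_rfl)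
    (LinearMap.ker_eq_bot.mp (ker_liftQ_eq_bot _ _ _ le_rfl)) hN

lemma mem_prod_s2 (hM : S.mem (.of R M)) (hN : S.mem (.of R N)) : S.mem (.of R (M × N)) :=
  S.mem_of_extension (A := .of R M) (M := .of R (M × N)) (B := .of R N)
    (LinearMap.inl R M N) (LinearMap.snd R M N) LinearMap.inl_injective LinearMap.snd_surjective
    (LinearMap.range_inl R M N) hM hN

lemma mem_pi (hN : S.mem (.of R N)) : ∀ k : ℕ, S.mem (.of R (Fin k → N))
  | 0 => S.mem_of_injective' 0 (Function.injective_of_subsingleton _) hN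
  | k + 1 => S.mem_of_surjective' (Fin.consLinearEquiv R fun _ => N).toLinearMap
      (LinearEquiv.surjective _) (S.mem_prod_s2 hN (mem_pi hN k))

lemma mem_comap_subtype (T L : Submodule R M) (hL : S.mem (.of R L)) :
    S.mem (.of R (L.comap T.subtype)) :=
  S.mem_of_injective' (T.subtype.restrict (p := L.comap T.subtype) (q := L) fun _ hx => hx)
    (fun _ _ h => Subtype.ext (Subtype.ext (congrArg Subtype.val h :))) hL

lemma mem_torsionBySet_of_le (A : Submodule R M) {I J : Ideal R} (hIJ : I ≤ J)
    (hI : S.mem (.of R (torsionBySet R M I))) : S.mem (.of R (torsionBySet R A J)) := by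
  refine S.mem_of_injective'
    (A.subtype.restrict (p := torsionBySet R A J) (q := torsionBySet R M I) fun x hx => ?_)
    (fun _ _ h => Subtype.ext (Subtype.ext (congrArg Subtype.val h :))) hI
  rw [mem_torsionBySet_iff] at hx ⊢
  exact fun a => congrArg Subtype.val (hx ⟨a, hIJ a.2⟩)

end Closure

section Torsion

variable {M : Type} [AddCommGroup M] [Module R M]

/-- With generators `s₁, …, sᵣ` of `I`, the map `m ↦ (sᵢ • m)ᵢ : M → Nʳ` has kernel `(0 :_M I)`. -/
lemma mem_of_mem_torsionBySet_of_smul_mem {I : Ideal R} (hI : I.FG) (N : Submodule R M)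
    (hN : S.mem (.of R N)) (hIN : ∀ a ∈ I, ∀ m : M, a • m ∈ N)
    (hT : S.mem (.of R (torsionBySet R M I))) : S.mem (.of R M) := by
  obtain ⟨r, s, hs⟩ := fg_iff_exists_fin_generating_family.mp hI
  have hsI (i : Fin r) : s i ∈ I := hs ▸ subset_span (Set.mem_range_self i)
  let φ : M →ₗ[R] Fin r → N :=
    LinearMap.pi fun i => (LinearMap.lsmul R M (s i)).codRestrict N (hIN _ (hsI i))
  refine S.mem_of_mem_ker φ (S.mem_of_le (fun m hm => ?_) hT) (S.mem_pi hN r)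
  rw [← hs, ← Ideal.span, ← torsionBySet_eq_torsionBySet_span, mem_torsionBySet_iff]
  rintro ⟨_, i, rfl⟩
  exact congrArg Subtype.val (congrFun (LinearMap.mem_ker.mp hm) i)

lemma mem_torsionBySet_pow {I : Ideal R} (hI : I.FG)
    (h : S.mem (.of R (torsionBySet R M I))) (k : ℕ) :
    S.mem (.of R (torsionBySet R M ↑(I ^ k))) := by
  induction k with
  | zero =>
    refine S.mem_of_le (fun m hm => ?_) h
    have hm0 : m = 0 := by simpa using (mem_torsionBySet_iff _ _).mp hm ⟨1, by simp⟩
    exact hm0 ▸ zero_mem _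
  | succ k ih =>
    set T := torsionBySet R M ↑(I ^ (k + 1))
    refine S.mem_of_mem_torsionBySet_of_smul_mem hI _ (S.mem_comap_subtype T _ ih)
      (fun a ha m => ?_) (S.mem_torsionBySet_of_le T le_rfl h)
    refine (mem_torsionBySet_iff _ _).mpr fun b => ?_
    rw [T.subtype_apply, T.coe_smul, smul_smul]
    exact (mem_torsionBySet_iff _ _).mp m.2 ⟨_, pow_succ I k ▸ Ideal.mul_mem_mul b.2 ha⟩

lemma mem_torsionBySet_quotient {J : Ideal R} (hJ : J.FG) (L : Submodule R M)
    (hL : S.mem (.of R L)) (hT : S.mem (.of R (torsionBySet R M J))) :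
    S.mem (.of R (torsionBySet R (M ⧸ L) J)) := by
  set T := (torsionBySet R (M ⧸ L) J).comap L.mkQ
  have hJT (a : R) (ha : a ∈ J) (m : T) : a • (m : M) ∈ L := by
    rw [← Quotient.mk_eq_zero, Quotient.mk_smul]
    exact (mem_torsionBySet_iff _ _).mp m.2 ⟨a, ha⟩
  refine S.mem_of_surjective' (L.mkQ.restrict (p := T) (q := torsionBySet R (M ⧸ L) J)
    fun _ hx => hx) (fun w => ?_) <| S.mem_of_mem_torsionBySet_of_smul_mem hJ _
      (S.mem_comap_subtype T L hL) hJT (S.mem_torsionBySet_of_le T le_rfl hT)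
  obtain ⟨m, hm⟩ := L.mkQ_surjective w
  exact ⟨⟨m, show L.mkQ m ∈ _ from hm ▸ w.2⟩, Subtype.ext hm⟩

end Torsion

lemma melkerssonCondition_top : MelkerssonCondition R S.mem ⊤ := by
  intro M hM hT
  refine S.mem_of_surjective' (torsionBySet R M ↑(⊤ : Ideal R)).subtype
    (fun m => ⟨⟨m, (mem_torsionBySet_iff _ _).mpr fun a => ?_⟩, rfl⟩) hT
  obtain ⟨n, hn⟩ := hM m
  exact hn a (by simp [Ideal.top_pow])

lemma melkerssonCondition_of_mul_mem {J : Ideal R} (hJ : J.FG) {a b : R} (hab : a * b ∈ J)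
    (ha : MelkerssonCondition R S.mem (J ⊔ Ideal.span {a}))
    (hb : MelkerssonCondition R S.mem (J ⊔ Ideal.span {b})) :
    MelkerssonCondition R S.mem J := by
  intro M hM hJM
  set L := torsion' R M (Submonoid.powers a)
  have hL : S.mem (.of R L) := by
    refine ha _ (hM.submodule_sup L fun m hm => ?_) (S.mem_torsionBySet_of_le L le_sup_left hJM)
    obtain ⟨⟨_, k, rfl⟩, hk⟩ := (mem_torsion'_iff _ m).mp hm
    exact ⟨k, hk⟩
  -- `aⁿ • (bⁿ • m) = (ab)ⁿ • m = 0` once `Jⁿ` kills `m`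
  have hbL (m : M) : ∃ k : ℕ, b ^ k • m ∈ L := by
    obtain ⟨n, hn⟩ := hM m
    refine ⟨n, (mem_torsion'_iff _ _).mpr ⟨⟨a ^ n, n, rfl⟩, ?_⟩⟩
    rw [Submonoid.smul_def, smul_smul, ← mul_pow]
    exact hn _ (Ideal.pow_mem_pow hab n)
  have hQ : S.mem (.of R (M ⧸ L)) :=
    hb _ (hM.quotient_sup L hbL) <| S.mem_torsionBySet_quotient
      (Submodule.FG.sup hJ (fg_span_singleton b)) L hL
      (S.mem_of_le (torsionBySet_le_torsionBySet_of_subset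
        (SetLike.coe_subset_coe.mpr le_sup_left)) hJM)
  exact S.mem_of_mem_quotient L hL hQ

theorem melkerssonCondition_of_forall_le [IsNoetherianRing R] (J : Ideal R)
    (h : ∀ q : PrimeSpectrum R, J ≤ q.asIdeal → q ∈ MP R S.mem) :
    MelkerssonCondition R S.mem J := by
  induction J using WellFoundedGT.induction with
  | _ J IH =>
  by_cases hJ : J.IsPrime
  · exact h ⟨J, hJ⟩ le_rfl
  obtain rfl | ⟨a, ha, b, hb, hab⟩ := Ideal.not_isPrime_iff.mp hJ
  · exact S.melkerssonCondition_top
  have hlt {c : R} (hc : c ∉ J) : J < J ⊔ Ideal.span {c} :=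
    left_lt_sup.mpr fun hle => hc (hle (Ideal.mem_span_singleton_self c))
  exact S.melkerssonCondition_of_mul_mem (IsNoetherian.noetherian J) hab
    (IH _ (hlt ha) fun q hq => h q (le_sup_left.trans hq))
    (IH _ (hlt hb) fun q hq => h q (le_sup_left.trans hq))

theorem mem_MP_of_mem_minimalPrimes [IsNoetherianRing R] {p : PrimeSpectrum R}
    (hp : p.asIdeal ∈ minimalPrimes R) (h : ∀ q, p < q → q ∈ MP R S.mem) :
    p ∈ MP R S.mem := by
  obtain ⟨n, s, hsp, hs⟩ := Ideal.exists_notMem_forall_mem_pow_mul_eq_zero hp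
  intro M hM hpM
  set K := torsionBySet R M ↑(Ideal.span {s})
  have hK : S.mem (.of R K) := by
    refine S.melkerssonCondition_of_forall_le (p.asIdeal ⊔ Ideal.span {s}) (fun q hq => h q ?_) _
      (hM.submodule_sup K fun m hm => ⟨1, ?_⟩) (S.mem_torsionBySet_of_le K le_sup_left hpM)
    · refine (PrimeSpectrum.asIdeal_lt_asIdeal p q).mp (lt_of_le_not_ge (le_sup_left.trans hq) ?_)
      exact fun hqp => hsp (hqp (hq (Ideal.mem_sup_right (Ideal.mem_span_singleton_self s))))
    · rw [pow_one]
      exact (mem_torsionBySet_iff _ _).mp hm ⟨s, Ideal.mem_span_singleton_self s⟩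
  refine S.mem_of_mem_torsionBySet_of_smul_mem (fg_span_singleton s) _
    (S.mem_torsionBySet_pow (IsNoetherian.noetherian _) hpM n) (fun a ha m => ?_) hK
  obtain ⟨c, rfl⟩ := Ideal.mem_span_singleton'.mp ha
  refine (mem_torsionBySet_iff _ _).mpr fun x => ?_
  rw [smul_smul, mul_left_comm, mul_comm (x : R) s, hs x x.2, mul_zero, zero_smul]

end SerreClass

/-- If `MP[S]` contains every prime of height at least one, then it contains all
minimal primes; in particular `MP[S] = Spec R`. -/
theorem stmt_2 {R : Type} [CommRing R] [IsNoetherianRing R] (S : SerreClass R)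
    (h : ∀ p : PrimeSpectrum R, 1 ≤ Order.height p → p ∈ MP R S.mem) :
    (∀ p : PrimeSpectrum R, p.asIdeal ∈ minimalPrimes R → p ∈ MP R S.mem) ∧
    MP R S.mem = Set.univ := by
  have h' (p : PrimeSpectrum R) (hp : ¬IsMin p) : p ∈ MP R S.mem :=
    h p (Order.one_le_iff_ne_zero.mpr (Order.height_ne_zero.mpr hp))
  have hmin (p : PrimeSpectrum R) (hp : p.asIdeal ∈ minimalPrimes R) : p ∈ MP R S.mem :=
    S.mem_MP_of_mem_minimalPrimes hp fun q hpq => h' q (not_isMin_of_lt hpq)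
  refine ⟨hmin, Set.eq_univ_of_forall fun p => ?_⟩
  by_cases hp : IsMin p
  · exact hmin p (PrimeSpectrum.isMin_iff.mp hp)
  · exact h' p hp
end

section
/- Let R be a commutative noetherian ring and S a nonzero Serre subcategory of the category of R-modules. If every maximal ideal of R belongs to MP[S], then there exists a maximal ideal m of R such that the injective hull E_R(R/m) belongs to S. In particular, if R is a noetherian local ring with maximal ideal m and m ∈ MP[S], then S contains every Artinian R-module. -/
/-!
Common framework: a *Serre class* is a class of (bundled) `R`-modules closed under
submodules, quotient modules and extensions.  `MelkerssonCondition R P I` is the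
Melkersson condition `(C_I)`: if `Γ_I(M) = M` (every element of `M` is annihilated by
some power of `I`) and `(0 :_M I)` (the `I`-torsion-by-`I` submodule `torsionBySet`)
belongs to the class, then `M` belongs to the class.  `MP R P` is the set of prime
ideals `p` such that the class satisfies `(C_p)`.
-/

open CategoryTheory

variable (R : Type) [CommRing R]

/-!
A nonzero Serre class `S` contains `R ⧸ m` for some maximal ideal `m`: it is a quotient of a
cyclic submodule `R ⧸ ann x` of a nonzero member. Over a noetherian ring an essential extension
of a module killed by `m` is `m`-power torsion, and in an injective hull `E` of `R ⧸ m` the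
socle `(0 :_E m)` is the image of `R ⧸ m`; so `(C_m)` puts `E` in `S`. Over a local ring, an
Artinian module `M` is `m`-power torsion by Nakayama's lemma, and `(0 :_M m)` is a
finite-dimensional `R ⧸ m`-vector space, hence in `S`; again `(C_m)` gives `M ∈ S`.

Injective hulls are maximal essential extensions inside an injective module.
-/

universe v

theorem Module.Injective.of_retraction {R : Type*} {Q M : Type v} [Ring R] [AddCommGroup Q]
    [Module R Q] [AddCommGroup M] [Module R M] [Module.Injective R M] (i : Q →ₗ[R] M)
    (ρ : M →ₗ[R] Q) (hρ : ∀ x, ρ (i x) = x) : Module.Injective R Q where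
  out X Y _ _ _ _ f hf g := by
    obtain ⟨h, hh⟩ := Module.Injective.out f hf (i ∘ₗ g)
    exact ⟨ρ ∘ₗ h, fun x ↦ by simp [hh, hρ]⟩

namespace Submodule

variable {R M : Type*} [Ring R] [AddCommGroup M] [Module R M]

/-- For `N ≤ W`, this says that `W` is an essential extension of `N`. -/
def IsEssentialIn (N W : Submodule R M) : Prop :=
  ∀ x ∈ W, x ≠ 0 → ∃ r : R, r • x ∈ N ∧ r • x ≠ 0

theorem isEssentialIn_top_iff {N : Submodule R M} :
    N.IsEssentialIn ⊤ ↔ ∀ W : Submodule R M, W ≠ ⊥ → W ⊓ N ≠ ⊥ := by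
  constructor
  · intro h W hW
    obtain ⟨x, hxW, hx⟩ := W.ne_bot_iff.mp hW
    obtain ⟨r, hrN, hr⟩ := h x trivial hx
    exact (Submodule.ne_bot_iff _).mpr ⟨r • x, ⟨W.smul_mem r hxW, hrN⟩, hr⟩
  · intro h x _ hx
    obtain ⟨y, ⟨hyx, hyN⟩, hy⟩ :=
      (Submodule.ne_bot_iff _).mp (h (R ∙ x) (span_singleton_eq_bot.not.mpr hx))
    obtain ⟨r, rfl⟩ := mem_span_singleton.mp hyx
    exact ⟨r, hyN, hy⟩

theorem isEssentialIn_sSup {N : Submodule R M} {c : Set (Submodule R M)}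
    (hc : IsChain (· ≤ ·) c) (h : ∀ W ∈ c, N.IsEssentialIn W) : N.IsEssentialIn (sSup c) := by
  intro x hx hx0
  rcases c.eq_empty_or_nonempty with rfl | hne
  · exact absurd (by simpa using hx) hx0
  obtain ⟨W, hW, hxW⟩ := (mem_sSup_of_directed hne hc.directedOn).mp hx
  exact h W hW x hxW hx0

theorem exists_maximal_isEssentialIn (N : Submodule R M) :
    ∃ E, Maximal (fun W ↦ N ≤ W ∧ N.IsEssentialIn W) E := by
  obtain ⟨E, -, hE⟩ := zorn_le_nonempty₀ {W | N ≤ W ∧ N.IsEssentialIn W}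
    (fun c hc hchain W hW ↦ ⟨sSup c, ⟨(hc hW).1.trans (le_sSup hW),
      isEssentialIn_sSup hchain fun W hW ↦ (hc hW).2⟩, fun _ ↦ le_sSup⟩)
    N ⟨le_rfl, fun x hx hx0 ↦ ⟨1, by simpa using hx, by simpa using hx0⟩⟩
  exact ⟨E, hE⟩

theorem exists_maximal_disjoint (E : Submodule R M) : ∃ C, Maximal (Disjoint · E) C := by
  have hchain : ∀ c ⊆ {C | Disjoint C E}, IsChain (· ≤ ·) c → c.Nonempty →
      Disjoint (sSup c) E := fun c hc hchain hne ↦ disjoint_def.mpr fun x hx hxE ↦ by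
    obtain ⟨C, hC, hxC⟩ := (mem_sSup_of_directed hne hchain.directedOn).mp hx
    exact disjoint_def.mp (hc hC) x hxC hxE
  obtain ⟨C, -, hC⟩ := zorn_le_nonempty₀ {C | Disjoint C E}
    (fun c hc hc' W hW ↦ ⟨sSup c, hchain c hc hc' ⟨W, hW⟩, fun _ ↦ le_sSup⟩) ⊥ disjoint_bot_left
  exact ⟨C, hC⟩

theorem isEssentialIn_map_mkQ {E C : Submodule R M} (hC : Maximal (Disjoint · E) C) :
    (E.map C.mkQ).IsEssentialIn ⊤ := by
  intro y _ hy
  obtain ⟨x, rfl⟩ := C.mkQ_surjective y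
  have hxC : x ∉ C := fun h ↦ hy ((Quotient.mk_eq_zero C).mpr h)
  have hnot : ¬ Disjoint (C ⊔ R ∙ x) E := fun h ↦
    hxC (hC.eq_of_ge h le_sup_left ▸ mem_sup_right (mem_span_singleton_self x))
  obtain ⟨z, hzx, hzE, hz⟩ : ∃ z ∈ C ⊔ R ∙ x, z ∈ E ∧ z ≠ 0 := by
    simpa [disjoint_def] using hnot
  obtain ⟨c, hc, _, hw, rfl⟩ := mem_sup.mp hzx
  obtain ⟨r, rfl⟩ := mem_span_singleton.mp hw
  have hmk : C.mkQ (c + r • x) = r • C.mkQ x := by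
    have hc0 : C.mkQ c = 0 := (Quotient.mk_eq_zero C).mpr hc
    rw [map_add, hc0, zero_add, map_smul]
  refine ⟨r, ⟨c + r • x, hzE, hmk⟩, fun h0 ↦ hz ?_⟩
  exact disjoint_def.mp hC.prop _ ((Quotient.mk_eq_zero C).mp (hmk.trans h0)) hzE

/-- A complement `C` maximal with `C ⊓ E = ⊥` makes `E` essential in `M ⧸ C`; a lift
`M ⧸ C → M` of `E ↪ M` then has as range an essential extension of `N` containing `E`,
which must be `E`. -/
theorem exists_retraction_of_maximal_isEssentialIn [Module.Injective R M] {N E : Submodule R M}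
    (hE : Maximal (fun W ↦ N ≤ W ∧ N.IsEssentialIn W) E) :
    ∃ ρ : M →ₗ[R] E, ∀ x : E, ρ x = x := by
  obtain ⟨C, hC⟩ := exists_maximal_disjoint E
  have hπ : Function.Injective (C.mkQ ∘ₗ E.subtype) := fun a b hab ↦ by
    have h := (Quotient.eq C).mp hab
    exact Subtype.ext (sub_eq_zero.mp (disjoint_def.mp hC.prop _ h (sub_mem a.2 b.2)))
  obtain ⟨σ, hσ⟩ := Module.Injective.out _ hπ E.subtype
  have hσE : ∀ z ∈ E, σ (C.mkQ z) = z := fun z hz ↦ hσ ⟨z, hz⟩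
  have hess : N.IsEssentialIn (LinearMap.range σ) := by
    rintro _ ⟨y, rfl⟩ hy
    obtain ⟨r, ⟨z, hzE, hzr⟩, hr⟩ := isEssentialIn_map_mkQ hC y trivial
      fun h ↦ hy (by rw [h, map_zero])
    have hσz : r • σ y = z := by rw [← map_smul, ← hzr]; exact hσE z hzE
    obtain ⟨s, hsN, hs⟩ := hE.prop.2 z hzE fun h ↦ hr (by rw [← hzr, h, map_zero])
    exact ⟨s * r, by rwa [mul_smul, hσz], by rwa [mul_smul, hσz]⟩
  have hEσ : E ≤ LinearMap.range σ := fun z hz ↦ ⟨C.mkQ z, hσE z hz⟩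
  have hrange : LinearMap.range σ = E := hE.eq_of_ge ⟨hE.prop.1.trans hEσ, hess⟩ hEσ
  refine ⟨LinearMap.codRestrict E (σ ∘ₗ C.mkQ) fun x ↦ hrange ▸ LinearMap.mem_range_self σ _,
    fun x ↦ Subtype.ext (hσ x)⟩

end Submodule

theorem exists_isInjectiveHull {R : Type} [CommRing R] (N : ModuleCat.{0} R) :
    ∃ E : ModuleCat.{0} R, IsInjectiveHull R N E := by
  let J := Injective.under N
  have hι : Function.Injective (Injective.ι N).hom :=
    (ModuleCat.mono_iff_injective _).mp inferInstance
  have : Module.Injective R J := (Module.injective_iff_injective_object R J).mpr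
    (inferInstanceAs (Injective (Injective.under N)))
  obtain ⟨E, hE⟩ := (LinearMap.range (Injective.ι N).hom).exists_maximal_isEssentialIn
  obtain ⟨ρ, hρ⟩ := Submodule.exists_retraction_of_maximal_isEssentialIn hE
  have hιE : ∀ x, (Injective.ι N).hom x ∈ E := fun x ↦ hE.prop.1 ⟨x, rfl⟩
  refine ⟨ModuleCat.of R E, Module.Injective.of_retraction E.subtype ρ hρ,
    LinearMap.codRestrict E _ hιE, fun a b h ↦ hι (congrArg Subtype.val h),
    Submodule.isEssentialIn_top_iff.mp ?_⟩
  intro x _ hx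
  obtain ⟨r, ⟨y, hy⟩, hr⟩ := hE.prop.2 x x.2 fun h ↦ hx (Subtype.ext h)
  exact ⟨r, ⟨y, Subtype.ext hy⟩, fun h ↦ hr (congrArg Subtype.val h)⟩

section Torsion

variable {R M : Type*} [CommRing R] [AddCommGroup M] [Module R M]

open Submodule

/-- The annihilators of `a ^ n • x` increase with `n`; where they stabilize, `a ^ n • x` must
vanish, since a nonzero multiple of it in `N` would be killed by `a`. -/
theorem Submodule.IsEssentialIn.exists_pow_smul_eq_zero [IsNoetherianRing R] {N : Submodule R M}
    (hN : N.IsEssentialIn ⊤) {a : R} (ha : ∀ z ∈ N, a • z = 0) (x : M) :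
    ∃ n : ℕ, a ^ n • x = 0 := by
  have hsucc : ∀ (n : ℕ) (r : R), r • a ^ (n + 1) • x = a • r • a ^ n • x := fun n r ↦ by
    rw [pow_succ', mul_smul, smul_comm]
  obtain ⟨n, hn⟩ := monotone_stabilizes_iff_noetherian.mpr (inferInstance : IsNoetherian R R)
    ⟨fun n ↦ Ideal.torsionOf R M (a ^ n • x), monotone_nat_of_le_succ fun n r hr ↦ by
      simp only [Ideal.mem_torsionOf_iff] at hr ⊢
      rw [hsucc, hr, smul_zero]⟩
  refine ⟨n, by_contra fun hx ↦ ?_⟩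
  obtain ⟨r, hrN, hr⟩ := hN _ trivial hx
  have hr' : r ∈ Ideal.torsionOf R M (a ^ (n + 1) • x) := by
    rw [Ideal.mem_torsionOf_iff, hsucc]
    exact ha _ hrN
  have hstab : Ideal.torsionOf R M (a ^ n • x) = Ideal.torsionOf R M (a ^ (n + 1) • x) :=
    hn (n + 1) n.le_succ
  exact hr ((Ideal.mem_torsionOf_iff _ _).mp (hstab ▸ hr'))

theorem Submodule.IsEssentialIn.torsionBySet_le {m : Ideal R} (hm : m.IsMaximal)
    {N : Submodule R M} (hN : N.IsEssentialIn ⊤) : torsionBySet R M m ≤ N := by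
  intro x hx
  rcases eq_or_ne x 0 with rfl | hx0
  · exact N.zero_mem
  obtain ⟨r, hrN, hr⟩ := hN x trivial hx0
  have hkill : ∀ a ∈ m, a • x = 0 := fun a ha ↦ (mem_torsionBySet_iff _ _).mp hx ⟨a, ha⟩
  obtain ⟨s, i, hi, hsi⟩ := hm.exists_inv fun hrm ↦ hr (hkill r hrm)
  have hxs : x = s • r • x := calc
    x = (s * r + i) • x := by rw [hsi, one_smul]
    _ = s • r • x := by rw [add_smul, mul_smul, hkill i hi, add_zero]
  exact hxs ▸ N.smul_mem s hrN

/-- Nakayama's lemma applied to the stable value of the descending chain `I ^ n • Rx`. -/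
theorem IsArtinian.exists_pow_smul_eq_zero [IsNoetherianRing R] [IsArtinian R M] {I : Ideal R}
    (hI : I ≤ Ideal.jacobson ⊥) (x : M) : ∃ n : ℕ, ∀ a ∈ I ^ n, a • x = 0 := by
  obtain ⟨n, hn⟩ := IsArtinian.monotone_stabilizes
    ⟨fun n ↦ OrderDual.toDual (I ^ n • (R ∙ x)),
      fun i j h ↦ smul_mono_left (Ideal.pow_le_pow_right h)⟩
  have hstable : I ^ n • (R ∙ x) ≤ I • I ^ n • (R ∙ x) := by
    rw [← smul_assoc, smul_eq_mul, ← pow_succ']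
    exact (congrArg OrderDual.ofDual (hn (n + 1) n.le_succ)).le
  have hbot := eq_bot_of_le_smul_of_le_jacobson_bot I _
    (FG.smul (IsNoetherian.noetherian (I ^ n)) (fg_span_singleton x)) hstable hI
  refine ⟨n, fun a ha ↦ ?_⟩
  simpa [hbot] using smul_mem_smul ha (mem_span_singleton_self x)

end Torsion

theorem isTorsionByPowers_of_isEssentialIn {R : Type} [CommRing R] [IsNoetherianRing R]
    {I : Ideal R} {M : ModuleCat.{0} R} {N : Submodule R M} (hN : N.IsEssentialIn ⊤)
    (hNI : N ≤ Submodule.torsionBySet R M I) : IsTorsionByPowers R I M := by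
  intro x
  have hrad : I ≤ (Ideal.torsionOf R M x).radical := fun a ha ↦ by
    obtain ⟨n, hn⟩ := hN.exists_pow_smul_eq_zero
      (fun z hz ↦ (Submodule.mem_torsionBySet_iff _ _).mp (hNI hz) ⟨a, ha⟩) x
    exact ⟨n, (Ideal.mem_torsionOf_iff _ _).mpr hn⟩
  obtain ⟨n, hn⟩ := Ideal.exists_pow_le_of_le_radical_of_fg hrad (IsNoetherian.noetherian I)
  exact ⟨n, fun a ha ↦ (Ideal.mem_torsionOf_iff _ _).mp (hn ha)⟩

namespace SerreClass

variable {R : Type} [CommRing R] (S : SerreClass R)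

theorem mem_of_linearEquiv_s3 {X Y : Type} [AddCommGroup X] [Module R X] [AddCommGroup Y]
    [Module R Y] (e : X ≃ₗ[R] Y) (h : S.mem (ModuleCat.of R X)) : S.mem (ModuleCat.of R Y) :=
  S.mem_of_surjective (M := ModuleCat.of R X) (N := ModuleCat.of R Y) e.toLinearMap e.surjective h

theorem mem_of_subsingleton_s3 {M : ModuleCat.{0} R} (hM : S.mem M) (Z : Type) [AddCommGroup Z]
    [Module R Z] [Subsingleton Z] : S.mem (ModuleCat.of R Z) :=
  S.mem_of_injective (M := ModuleCat.of R Z) 0 (fun a b _ ↦ Subsingleton.elim a b) hM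

theorem mem_prod_s3 {X Y : Type} [AddCommGroup X] [Module R X] [AddCommGroup Y] [Module R Y]
    (hX : S.mem (ModuleCat.of R X)) (hY : S.mem (ModuleCat.of R Y)) :
    S.mem (ModuleCat.of R (X × Y)) :=
  S.mem_of_extension (M := ModuleCat.of R (X × Y)) (LinearMap.inl R X Y) (LinearMap.snd R X Y)
    LinearMap.inl_injective LinearMap.snd_surjective (LinearMap.range_inl R X Y) hX hY

theorem mem_pi_fin_s3 {X : Type} [AddCommGroup X] [Module R X] (hX : S.mem (ModuleCat.of R X)) :
    ∀ n : ℕ, S.mem (ModuleCat.of R (Fin n → X))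
  | 0 => S.mem_of_subsingleton_s3 hX _
  | n + 1 =>
    S.mem_of_linearEquiv_s3 (Fin.consLinearEquiv R fun _ ↦ X) (S.mem_prod_s3 hX (mem_pi_fin_s3 hX n))

/-- `T` is a finite-dimensional `R ⧸ m`-vector space, i.e. some `(R ⧸ m)ⁿ`. -/
theorem mem_of_isTorsionBySet_of_isArtinian {m : Ideal R} [m.IsMaximal]
    (hk : S.mem (ModuleCat.of R (R ⧸ m))) (T : Type) [AddCommGroup T] [Module R T]
    [IsArtinian R T] (hT : Module.IsTorsionBySet R T m) : S.mem (ModuleCat.of R T) := by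
  let := Ideal.Quotient.field m
  let : Module (R ⧸ m) T := hT.module
  have : IsScalarTower R (R ⧸ m) T := hT.isScalarTower
  have : IsArtinian (R ⧸ m) T := isArtinian_of_tower R ‹_›
  have : Module.Finite (R ⧸ m) T := (IsSemisimpleModule.finite_tfae.out 2 0).mp ‹_›
  exact S.mem_of_linearEquiv_s3 ((Module.finBasis (R ⧸ m) T).equivFun.restrictScalars R).symm
    (S.mem_pi_fin_s3 hk _)

theorem exists_isMaximal_mem_quotient (hS : ∃ M : ModuleCat.{0} R, S.mem M ∧ Nontrivial M) :
    ∃ m : Ideal R, m.IsMaximal ∧ S.mem (ModuleCat.of R (R ⧸ m)) := by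
  obtain ⟨M, hM, hnt⟩ := hS
  obtain ⟨x, hx⟩ := exists_ne (0 : M)
  obtain ⟨m, hm, hle⟩ := Ideal.exists_le_maximal _ ((Ideal.torsionOf_eq_top_iff R x).not.mpr hx)
  have hspan : S.mem (ModuleCat.of R (R ∙ x)) :=
    S.mem_of_injective (R ∙ x).subtype Subtype.val_injective hM
  have hcyc : S.mem (ModuleCat.of R (R ⧸ Ideal.torsionOf R M x)) :=
    S.mem_of_linearEquiv_s3 (Ideal.quotTorsionOfEquivSpanSingleton R M x).symm hspan
  exact ⟨m, hm, S.mem_of_surjective (Submodule.factor hle) (Submodule.factor_surjective hle) hcyc⟩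

theorem exists_isInjectiveHull_mem [IsNoetherianRing R]
    (hS : ∃ M : ModuleCat.{0} R, S.mem M ∧ Nontrivial M)
    (hC : ∀ m : Ideal R, m.IsMaximal → MelkerssonCondition R S.mem m) :
    ∃ m : Ideal R, m.IsMaximal ∧ ∃ E : ModuleCat.{0} R,
      IsInjectiveHull R (ModuleCat.of R (R ⧸ m)) E ∧ S.mem E := by
  obtain ⟨m, hm, hk⟩ := S.exists_isMaximal_mem_quotient hS
  obtain ⟨E, hE⟩ := exists_isInjectiveHull (ModuleCat.of R (R ⧸ m))
  obtain ⟨f, -, hess⟩ := hE.2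
  have hess := Submodule.isEssentialIn_top_iff.mpr hess
  have hkill : LinearMap.range f ≤ Submodule.torsionBySet R E m := by
    rintro _ ⟨y, rfl⟩
    refine (Submodule.mem_torsionBySet_iff _ _).mpr fun ⟨a, ha⟩ ↦ ?_
    obtain ⟨r, rfl⟩ := Ideal.Quotient.mk_surjective y
    rw [← map_smul, Algebra.smul_def, Ideal.Quotient.algebraMap_eq, ← map_mul,
      Ideal.Quotient.eq_zero_iff_mem.mpr (m.mul_mem_right r ha), map_zero]
  have hsocle : S.mem (ModuleCat.of R (Submodule.torsionBySet R E m)) :=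
    S.mem_of_injective (Submodule.inclusion (hess.torsionBySet_le hm))
      (Submodule.inclusion_injective _)
      (S.mem_of_surjective (N := ModuleCat.of R (LinearMap.range f)) f.rangeRestrict
        f.surjective_rangeRestrict hk)
  exact ⟨m, hm, E, hE, hC m hm E (isTorsionByPowers_of_isEssentialIn hess hkill) hsocle⟩

theorem mem_of_isArtinian [IsNoetherianRing R] [IsLocalRing R]
    (hS : ∃ M : ModuleCat.{0} R, S.mem M ∧ Nontrivial M)
    (hC : MelkerssonCondition R S.mem (IsLocalRing.maximalIdeal R))
    (M : ModuleCat.{0} R) [IsArtinian R M] : S.mem M := by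
  obtain ⟨m, hm, hk⟩ := S.exists_isMaximal_mem_quotient hS
  rw [IsLocalRing.eq_maximalIdeal hm] at hk
  exact hC M (IsArtinian.exists_pow_smul_eq_zero (IsLocalRing.maximalIdeal_le_jacobson ⊥))
    (S.mem_of_isTorsionBySet_of_isArtinian hk _ (Submodule.torsionBySet_isTorsionBySet _))

end SerreClass

/-- If every maximal ideal lies in `MP[S]` (`S` nonzero), some `E_R(R/m)` lies in `S`;
in particular over a local ring with `m ∈ MP[S]`, `S` contains all Artinian modules. -/
theorem stmt_3 {R : Type} [CommRing R] [IsNoetherianRing R] (S : SerreClass R)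
    (hS : ∃ M : ModuleCat.{0} R, S.mem M ∧ Nontrivial M) :
    ((∀ m : Ideal R, m.IsMaximal → MelkerssonCondition R S.mem m) →
      ∃ m : Ideal R, m.IsMaximal ∧ ∃ E : ModuleCat.{0} R,
        IsInjectiveHull R (ModuleCat.of R (R ⧸ m)) E ∧ S.mem E) ∧
    (∀ [IsLocalRing R],
      MelkerssonCondition R S.mem (IsLocalRing.maximalIdeal R) →
      ∀ M : ModuleCat.{0} R, IsArtinian R M → S.mem M) :=
  ⟨S.exists_isInjectiveHull_mem hS, fun hC M _ ↦ S.mem_of_isArtinian hS hC M⟩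
end
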